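/- arXiv:2201.12183 — 5 statements merged into one kernel-verified Lean document; each statement's English description precedes it below -/
import Mathlib

section
/- In a sequential posted price auction with n buyers with independent valuations, for any price vector p there exists a price vector p' with Rev(p') ≥ Rev(p) such that for every buyer i, p'_i ≥ Rev_{>i}(p'), where Rev_{>i}(p') is the seller's expected revenue in the auction restricted to buyers i+1,...,n. In particular, there exists an optimal price vector with this property. -/
/-- Expected revenue of the sequential posted price auction over the next `m` buyers
starting from buyer `i`, where `G i x = Pr[v_i ≥ x]` is the survival function of
buyer `i`'s valuation distribution and `p` is the price vector:
`Rev_{≥i} = Pr[v_i ≥ p_i]·p_i + (1 − Pr[v_i ≥ p_i])·Rev_{≥i+1}`, `Rev` after the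
last buyer being `0`. -/
def RevFrom (G : ℕ → ℝ → ℝ) (p : ℕ → ℝ) : ℕ → ℕ → ℝ
  | 0, _ => 0
  | m + 1, i => G i (p i) * p i + (1 - G i (p i)) * RevFrom G p m (i + 1)

lemma RevFrom_mem (G : ℕ → ℝ → ℝ) (hG01 : ∀ i x, G i x ∈ Set.Icc (0 : ℝ) 1)
    (p : ℕ → ℝ) (hp : ∀ i, p i ∈ Set.Icc (0 : ℝ) 1) :
    ∀ m i, RevFrom G p m i ∈ Set.Icc (0 : ℝ) 1 := by
  intro m
  induction m with
  | zero => intro i; simp [RevFrom]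
  | succ m ih =>
    intro i
    have h1 := hG01 i (p i)
    have h2 := hp i
    have h3 := ih (i + 1)
    simp only [Set.mem_Icc, RevFrom] at *
    constructor
    · nlinarith [h1.1, h1.2, h2.1, h2.2, h3.1, h3.2]
    · nlinarith [h1.1, h1.2, h2.1, h2.2, h3.1, h3.2]

lemma RevFrom_congr (G : ℕ → ℝ → ℝ) (p q : ℕ → ℝ) :
    ∀ m i, (∀ j, i ≤ j → p j = q j) → RevFrom G p m i = RevFrom G q m i := by
  intro m
  induction m with
  | zero => intro i _; simp [RevFrom]
  | succ m ih =>
    intro i h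
    have hi : p i = q i := h i le_rfl
    have := ih (i + 1) (fun j hj => h j (by omega))
    simp [RevFrom, hi, this]

lemma aux_exists (G : ℕ → ℝ → ℝ) (hG01 : ∀ i x, G i x ∈ Set.Icc (0 : ℝ) 1)
    (p : ℕ → ℝ) (hp : ∀ i, p i ∈ Set.Icc (0 : ℝ) 1) :
    ∀ m i, ∃ p' : ℕ → ℝ, (∀ j, p' j ∈ Set.Icc (0 : ℝ) 1) ∧
      RevFrom G p' m i ≥ RevFrom G p m i ∧
      ∀ k < m, p' (i + k) ≥ RevFrom G p' (m - (k + 1)) (i + k + 1) := by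
  intro m
  induction m with
  | zero =>
    intro i
    exact ⟨p, hp, le_refl _, by omega⟩
  | succ m ih =>
    intro i
    obtain ⟨q, hq01, hqrev, hqprop⟩ := ih (i + 1)
    set R := RevFrom G q m (i + 1) with hR
    have hRmem : R ∈ Set.Icc (0 : ℝ) 1 := RevFrom_mem G hG01 q hq01 m (i + 1)
    set b := max (p i) R with hb
    refine ⟨Function.update q i b, ?_, ?_, ?_⟩
    · intro j
      rcases eq_or_ne j i with rfl | hji
      · simp only [Function.update_self]
        exact ⟨le_max_of_le_right hRmem.1, max_le (hp j).2 hRmem.2⟩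
      · simpa [Function.update_of_ne hji] using hq01 j
    · -- revenue comparison
      have htail : RevFrom G (Function.update q i b) m (i + 1) = R := by
        rw [RevFrom_congr G _ q m (i + 1) (fun j hj => Function.update_of_ne (by omega) _ _)]
      have hGi := hG01 i (p i)
      have hGb := hG01 i b
      have hpi := hp i
      have hr : RevFrom G p m (i + 1) ≤ R := hqrev
      simp only [RevFrom, Function.update_self, htail, ge_iff_le]
      -- goal: G i (p i) * p i + (1 - G i (p i)) * RevFrom G p m (i+1) ≤ G i b * b + (1 - G i b) * R
      rcases le_or_gt R (p i) with hcase | hcase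
      · have hbe : b = p i := max_eq_left hcase
        rw [hbe]
        have : (1 - G i (p i)) * RevFrom G p m (i + 1) ≤ (1 - G i (p i)) * R :=
          mul_le_mul_of_nonneg_left hr (by linarith [hGi.2])
        linarith
      · have hbe : b = R := max_eq_right hcase.le
        rw [hbe]
        have h1 : G i R * R + (1 - G i R) * R = R := by ring
        have h2 : G i (p i) * p i + (1 - G i (p i)) * RevFrom G p m (i + 1) ≤ R := by
          nlinarith [hGi.1, hGi.2, hr, (RevFrom_mem G hG01 p hp m (i + 1)).1]
        linarith
    · intro k hk
      have htail : ∀ m' j, i + 1 ≤ j →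
          RevFrom G (Function.update q i b) m' j = RevFrom G q m' j := by
        intro m' j hj
        exact RevFrom_congr G _ q m' j (fun j' hj' => Function.update_of_ne (by omega) _ _)
      rcases Nat.eq_zero_or_pos k with rfl | hkpos
      · simp only [Nat.add_zero, Function.update_self]
        rw [show m + 1 - (0 + 1) = m by omega, htail m (i + 1) le_rfl]
        exact le_max_right _ _
      · obtain ⟨k', rfl⟩ := Nat.exists_eq_add_of_lt hkpos
        have hk' : k' < m := by omega
        have := hqprop k' hk'
        have he1 : i + (0 + k' + 1) = i + 1 + k' := by omega
        have he2 : i + (0 + k' + 1) + 1 = i + 1 + k' + 1 := by omega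
        rw [he1, Function.update_of_ne (by omega),
          show m + 1 - (0 + k' + 1 + 1) = m - (k' + 1) by omega,
          htail _ _ (by omega)]
        exact this

/-- For any price vector p there is a price vector p' with
Rev(p') ≥ Rev(p) such that every buyer i is offered a price at least the expected
revenue from the subsequent buyers: p'_i ≥ Rev_{>i}(p'). In particular (taking p
optimal) there is an optimal price vector with this property. -/
theorem exists_price_vector_dominating_continuation (n : ℕ)
    (G : ℕ → ℝ → ℝ)
    (hG01 : ∀ i x, G i x ∈ Set.Icc (0 : ℝ) 1)
    (hGanti : ∀ i, Antitone (G i))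
    (p : ℕ → ℝ) (hp : ∀ i, p i ∈ Set.Icc (0 : ℝ) 1) :
    ∃ p' : ℕ → ℝ, (∀ i, p' i ∈ Set.Icc (0 : ℝ) 1) ∧
      RevFrom G p' n 0 ≥ RevFrom G p n 0 ∧
      ∀ i < n, p' i ≥ RevFrom G p' (n - (i + 1)) (i + 1) := by
  obtain ⟨p', h1, h2, h3⟩ := aux_exists G hG01 p hp n 0
  exact ⟨p', h1, h2, fun i hi => by simpa using h3 i hi⟩
end

section
/- Consider a sequential posted price auction with n buyers. Let 𝒱 = {𝒱_i} and 𝒱^ε = {𝒱_i^ε} be two families of valuation distributions on [0,1] such that for every price x ∈ [0,1] and every buyer i, Pr_{v ∼ 𝒱_i^ε}[v ≥ x − ε] ≥ Pr_{v ∼ 𝒱_i}[v ≥ x]. Then max_p Rev(𝒱^ε, p) ≥ max_p Rev(𝒱, p) − ε, where the maxima are over price vectors p ∈ [0,1]^n. -/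
/-- Adjusted revenue: each price is raised to at least the continuation value. -/
def AdjRev (G : ℕ → ℝ → ℝ) (p : ℕ → ℝ) : ℕ → ℕ → ℝ
  | 0, _ => 0
  | m + 1, i =>
      G i (max (p i) (AdjRev G p m (i + 1))) * max (p i) (AdjRev G p m (i + 1)) +
        (1 - G i (max (p i) (AdjRev G p m (i + 1)))) * AdjRev G p m (i + 1)

lemma RevFrom_nonneg (G : ℕ → ℝ → ℝ) (p : ℕ → ℝ)
    (hG : ∀ i x, G i x ∈ Set.Icc (0:ℝ) 1) (hp : ∀ i, 0 ≤ p i) :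
    ∀ m i, 0 ≤ RevFrom G p m i := by
  intro m
  induction m with
  | zero => intro i; simp [RevFrom]
  | succ m ih =>
    intro i
    have h1 := (hG i (p i)).1
    have h2 := (hG i (p i)).2
    have h3 := ih (i + 1)
    have h4 := hp i
    simp only [RevFrom]
    nlinarith

lemma RevFrom_le_one (G : ℕ → ℝ → ℝ) (p : ℕ → ℝ)
    (hG : ∀ i x, G i x ∈ Set.Icc (0:ℝ) 1) (hp : ∀ i, p i ≤ 1) :
    ∀ m i, RevFrom G p m i ≤ 1 := by
  intro m
  induction m with
  | zero => intro i; simp [RevFrom]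
  | succ m ih =>
    intro i
    have h1 := (hG i (p i)).1
    have h2 := (hG i (p i)).2
    have h3 := ih (i + 1)
    have h4 := hp i
    simp only [RevFrom]
    nlinarith

lemma AdjRev_nonneg (G : ℕ → ℝ → ℝ) (p : ℕ → ℝ)
    (hG : ∀ i x, G i x ∈ Set.Icc (0:ℝ) 1) (hp : ∀ i, 0 ≤ p i) :
    ∀ m i, 0 ≤ AdjRev G p m i := by
  intro m
  induction m with
  | zero => intro i; simp [AdjRev]
  | succ m ih =>
    intro i
    set r := AdjRev G p m (i + 1) with hr
    set π := max (p i) r with hπ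
    have h1 := (hG i π).1
    have h2 := (hG i π).2
    have h3 := ih (i + 1)
    have h4 : 0 ≤ π := le_trans (hp i) (le_max_left _ _)
    simp only [AdjRev, ← hr, ← hπ]
    nlinarith

lemma AdjRev_le_one (G : ℕ → ℝ → ℝ) (p : ℕ → ℝ)
    (hG : ∀ i x, G i x ∈ Set.Icc (0:ℝ) 1) (hp : ∀ i, p i ≤ 1) :
    ∀ m i, AdjRev G p m i ≤ 1 := by
  intro m
  induction m with
  | zero => intro i; simp [AdjRev]
  | succ m ih =>
    intro i
    set r := AdjRev G p m (i + 1) with hr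
    set π := max (p i) r with hπ
    have h1 := (hG i π).1
    have h2 := (hG i π).2
    have h3 := ih (i + 1)
    have h4 : π ≤ 1 := max_le (hp i) (ih (i + 1))
    simp only [AdjRev, ← hr, ← hπ]
    nlinarith

lemma RevFrom_le_AdjRev (G : ℕ → ℝ → ℝ) (p : ℕ → ℝ)
    (hG : ∀ i x, G i x ∈ Set.Icc (0:ℝ) 1) :
    ∀ m i, RevFrom G p m i ≤ AdjRev G p m i := by
  intro m
  induction m with
  | zero => intro i; simp [RevFrom, AdjRev]
  | succ m ih =>
    intro i
    set r := AdjRev G p m (i + 1) with hr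
    set π := max (p i) r with hπ
    have h3 := ih (i + 1)
    have hq1 := (hG i (p i)).1
    have hq2 := (hG i (p i)).2
    have hQ1 := (hG i π).1
    have hQ2 := (hG i π).2
    simp only [RevFrom, AdjRev, ← hr, ← hπ]
    rcases le_total r (p i) with h | h
    · have hπp : π = p i := max_eq_left h
      rw [hπp]
      nlinarith
    · have hπr : π = r := max_eq_right h
      rw [hπr]
      nlinarith

lemma RevFrom_zero_price (G : ℕ → ℝ → ℝ) :
    ∀ m i, RevFrom G (fun _ => 0) m i = 0 := by
  intro m
  induction m with
  | zero => intro i; simp [RevFrom]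
  | succ m ih => intro i; simp [RevFrom, ih]

/-- Key lemma: shifting the adjusted prices down by ε under Gε loses at most ε. -/
lemma AdjRev_shift (n : ℕ) (ε : ℝ) (hε : 0 < ε)
    (G Gε : ℕ → ℝ → ℝ) (p : ℕ → ℝ)
    (hG01 : ∀ i x, G i x ∈ Set.Icc (0 : ℝ) 1)
    (hGε01 : ∀ i x, Gε i x ∈ Set.Icc (0 : ℝ) 1)
    (hdom : ∀ i, ∀ x ∈ Set.Icc (0 : ℝ) 1, Gε i (x - ε) ≥ G i x)
    (hp : ∀ i, p i ∈ Set.Icc (0 : ℝ) 1) :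
    ∀ m i, i + m = n →
      AdjRev G p m i - ε ≤
        RevFrom Gε (fun j => max (max (p j) (AdjRev G p (n - (j + 1)) (j + 1)) - ε) 0) m i := by
  set P : ℕ → ℝ := fun j => max (max (p j) (AdjRev G p (n - (j + 1)) (j + 1)) - ε) 0 with hP
  intro m
  induction m with
  | zero => intro i _; simp [RevFrom, AdjRev]; positivity
  | succ m ih =>
    intro i hi
    have hi1 : (i + 1) + m = n := by omega
    have hn : n - (i + 1) = m := by omega
    set r := AdjRev G p m (i + 1) with hr
    set π := max (p i) r with hπ
    have hr0 : 0 ≤ r := AdjRev_nonneg G p hG01 (fun j => (hp j).1) m (i + 1)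
    have hr1 : r ≤ 1 := AdjRev_le_one G p hG01 (fun j => (hp j).2) m (i + 1)
    have hπ0 : 0 ≤ π := le_trans (hp i).1 (le_max_left _ _)
    have hπ1 : π ≤ 1 := max_le (hp i).2 hr1
    have hπr : r ≤ π := le_max_right _ _
    have hPi : P i = max (π - ε) 0 := by
      simp only [hP, hn, ← hr, ← hπ]
    have hrε : r - ε ≤ RevFrom Gε P m (i + 1) := ih (i + 1) hi1
    have hrε0 : 0 ≤ RevFrom Gε P m (i + 1) := by
      apply RevFrom_nonneg Gε P hGε01
      intro j; exact le_max_right _ _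
    set rε := RevFrom Gε P m (i + 1) with hrεdef
    have hq1 := (hG01 i π).1
    have hq2 := (hG01 i π).2
    have hQ1 := (hGε01 i (P i)).1
    have hQ2 := (hGε01 i (P i)).2
    simp only [RevFrom, AdjRev, ← hr, ← hπ, ← hrεdef]
    rcases le_total ε π with h | h
    · have hPi' : P i = π - ε := by
        rw [hPi, max_eq_left (by linarith)]
      have hdomπ : Gε i (π - ε) ≥ G i π := hdom i π ⟨hπ0, hπ1⟩
      rw [hPi'] at hQ1 hQ2
      rw [hPi']
      nlinarith [mul_nonneg (sub_nonneg.2 hdomπ) (sub_nonneg.2 hπr),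
        mul_nonneg (sub_nonneg.2 hQ2) (sub_nonneg.2 hrε)]
    · have hPi' : P i = 0 := by
        rw [hPi, max_eq_right (by linarith)]
      rw [hPi'] at hQ1 hQ2
      rw [hPi']
      nlinarith [mul_nonneg (sub_nonneg.2 hQ2) hrε0,
        mul_nonneg (sub_nonneg.2 hq2) (sub_nonneg.2 hπr)]

/-- If the distributions 𝒱^ε (with survival functions Gε) satisfy
Pr_{𝒱_i^ε}[v ≥ x − ε] ≥ Pr_{𝒱_i}[v ≥ x] for every price x ∈ [0,1] and buyer i, then
max_{p ∈ [0,1]^n} Rev(𝒱^ε, p) ≥ max_{p ∈ [0,1]^n} Rev(𝒱, p) − ε. -/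
theorem revenue_small_decrease (n : ℕ) (ε : ℝ) (hε : 0 < ε)
    (G Gε : ℕ → ℝ → ℝ)
    (hG01 : ∀ i x, G i x ∈ Set.Icc (0 : ℝ) 1)
    (hGε01 : ∀ i x, Gε i x ∈ Set.Icc (0 : ℝ) 1)
    (hGanti : ∀ i, Antitone (G i)) (hGεanti : ∀ i, Antitone (Gε i))
    (hdom : ∀ i, ∀ x ∈ Set.Icc (0 : ℝ) 1, Gε i (x - ε) ≥ G i x) :
    sSup {r : ℝ | ∃ p : ℕ → ℝ, (∀ i, p i ∈ Set.Icc (0 : ℝ) 1) ∧ r = RevFrom Gε p n 0} ≥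
      sSup {r : ℝ | ∃ p : ℕ → ℝ, (∀ i, p i ∈ Set.Icc (0 : ℝ) 1) ∧ r = RevFrom G p n 0} - ε := by
  set Sε := {r : ℝ | ∃ p : ℕ → ℝ, (∀ i, p i ∈ Set.Icc (0 : ℝ) 1) ∧ r = RevFrom Gε p n 0}
  have hbdd : BddAbove Sε := by
    refine ⟨1, ?_⟩
    rintro x ⟨p, hp, rfl⟩
    exact RevFrom_le_one Gε p hGε01 (fun i => (hp i).2) n 0
  have h0 : (0 : ℝ) ∈ Sε := by
    refine ⟨fun _ => 0, fun i => ⟨le_refl _, zero_le_one⟩, ?_⟩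
    rw [RevFrom_zero_price]
  have hSε0 : 0 ≤ sSup Sε := le_csSup hbdd h0
  rw [ge_iff_le, sub_le_iff_le_add]
  apply Real.sSup_le
  · rintro x ⟨p, hp, rfl⟩
    set P : ℕ → ℝ := fun j => max (max (p j) (AdjRev G p (n - (j + 1)) (j + 1)) - ε) 0 with hPdef
    have hPmem : ∀ i, P i ∈ Set.Icc (0 : ℝ) 1 := by
      intro i
      constructor
      · exact le_max_right _ _
      · apply max_le _ zero_le_one
        have h1 : max (p i) (AdjRev G p (n - (i + 1)) (i + 1)) ≤ 1 :=
          max_le (hp i).2 (AdjRev_le_one G p hG01 (fun j => (hp j).2) _ _)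
        linarith
    have hmem : RevFrom Gε P n 0 ∈ Sε := ⟨P, hPmem, rfl⟩
    have h1 : RevFrom G p n 0 ≤ AdjRev G p n 0 := RevFrom_le_AdjRev G p hG01 n 0
    have h2 : AdjRev G p n 0 - ε ≤ RevFrom Gε P n 0 :=
      AdjRev_shift n ε hε G Gε p hG01 hGε01 hdom hp n 0 (by omega)
    have h3 : RevFrom Gε P n 0 ≤ sSup Sε := le_csSup hbdd hmem
    linarith
  · linarith
end

section
/- In a sequential posted price auction, if the price vector p satisfies p_i ≥ Rev_{>i}(𝒱, p) for all buyers i, and 𝒱^ε satisfies Pr_{v∼𝒱_i^ε}[v ≥ x − ε] ≥ Pr_{v∼𝒱_i}[v ≥ x] for all x and i, then for the clipped price vector p^ε with p^ε_i = max(p_i − ε, 0) it holds for every i that Rev_{≥i}(𝒱^ε, p^ε) ≥ Rev_{≥i}(𝒱, p) − ε. -/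
/-- If the price vector p satisfies p_i ≥ Rev_{>i}(𝒱, p) for every
buyer i, and 𝒱^ε (survival functions Gε) satisfies
Pr_{𝒱_i^ε}[v ≥ x − ε] ≥ Pr_{𝒱_i}[v ≥ x] for all x and i, then for the clipped
prices p^ε_i = max(p_i − ε, 0) it holds for every i that
Rev_{≥i}(𝒱^ε, p^ε) ≥ Rev_{≥i}(𝒱, p) − ε. -/
theorem revenue_decrease_clipped_prices (n : ℕ) (ε : ℝ) (hε : 0 < ε)
    (G Gε : ℕ → ℝ → ℝ)
    (hG01 : ∀ i x, G i x ∈ Set.Icc (0 : ℝ) 1)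
    (hGε01 : ∀ i x, Gε i x ∈ Set.Icc (0 : ℝ) 1)
    (hGεanti : ∀ i, Antitone (Gε i))
    (hdom : ∀ i x, Gε i (x - ε) ≥ G i x)
    (p : ℕ → ℝ) (hp : ∀ i, p i ∈ Set.Icc (0 : ℝ) 1)
    (hbig : ∀ i < n, p i ≥ RevFrom G p (n - (i + 1)) (i + 1)) :
    ∀ i ≤ n,
      RevFrom Gε (fun j => max (p j - ε) 0) (n - i) i ≥ RevFrom G p (n - i) i - ε := by
  set pε : ℕ → ℝ := fun j => max (p j - ε) 0 with hpε
  have hpε0 : ∀ j, 0 ≤ pε j := fun j => le_max_right _ _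
  have hεnn : ∀ m i, 0 ≤ RevFrom Gε pε m i := RevFrom_nonneg Gε pε hGε01 hpε0
  suffices h : ∀ m i, i + m = n →
      RevFrom Gε pε m i ≥ RevFrom G p m i - ε by
    intro i hi
    exact h (n - i) i (by omega)
  intro m
  induction m with
  | zero => intro i _; simp [RevFrom]; linarith
  | succ m ih =>
    intro i hin
    have hIH := ih (i+1) (by omega)
    have hb := hbig i (by omega)
    have hb' : p i ≥ RevFrom G p m (i+1) := by
      have hm : n - (i+1) = m := by omega
      rwa [hm] at hb
    have hg := hG01 i (p i)
    have hgε := hGε01 i (pε i)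
    have hpi := hp i
    simp only [RevFrom]
    by_cases hc : p i < ε
    · -- RHS ≤ p i < ε, LHS ≥ 0
      have h0 := hεnn (m+1) i
      simp only [RevFrom] at h0
      nlinarith [hg.1, hg.2, hpi.1]
    · push_neg at hc
      have hpeq : pε i = p i - ε := by
        simp [hpε, max_eq_left (by linarith : (0:ℝ) ≤ p i - ε)]
      have hge : Gε i (pε i) ≥ G i (p i) := by
        rw [hpeq]; exact hdom i (p i)
      have h1 : Gε i (pε i) * pε i ≥ Gε i (pε i) * (p i - ε) := by
        rw [hpeq]
      have h2 : (1 - Gε i (pε i)) * RevFrom Gε pε m (i+1) ≥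
          (1 - Gε i (pε i)) * (RevFrom G p m (i+1) - ε) := by
        apply mul_le_mul_of_nonneg_left hIH
        linarith [hgε.2]
      nlinarith [hgε.1, hgε.2, hg.1, hg.2]
end

section
/- With the notation of the previous statement, assume further ι > 0 and define ȳ_{θ,ξ,p} := y_{θ,ξ,p} + (∏_{i=1}^n δ_{i,ξ_i,p_i}) / ι^{n−1}. Then ȳ ≥ y pointwise, and for every i, ξ_i, p_i the tightened constraint holds with equality: ∑_{ξ':ξ'_i=ξ_i} ∑_{p':p'_i=p_i} ȳ_{θ,ξ',p'} = ξ_i(θ)·t_{i,ξ_i,p_i}. -/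
open Finset

lemma key_prod_sum {n : ℕ} {X P : Type} [Fintype X] [Fintype P] [DecidableEq X] [DecidableEq P]
    (δ : Fin n → X → P → ℝ) (i : Fin n) (x : X) (pp : P) :
    ∑ ξ' ∈ Finset.univ.filter (fun ξ' : Fin n → X => ξ' i = x),
      ∑ p' ∈ Finset.univ.filter (fun p' : Fin n → P => p' i = pp),
        ∏ j, δ j (ξ' j) (p' j)
    = δ i x pp * ∏ j ∈ Finset.univ.erase i, (∑ x', ∑ pp', δ j x' pp') := by
  classical
  set g : Fin n → X × P → ℝ := fun j z => δ j z.1 z.2 with hg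
  set t : Fin n → Finset (X × P) := fun j => if j = i then {(x, pp)} else Finset.univ with ht
  have h1 : ∑ ξ' ∈ Finset.univ.filter (fun ξ' : Fin n → X => ξ' i = x),
      ∑ p' ∈ Finset.univ.filter (fun p' : Fin n → P => p' i = pp),
        ∏ j, δ j (ξ' j) (p' j)
      = ∑ f ∈ Fintype.piFinset t, ∏ j, g j (f j) := by
    rw [← Finset.sum_product']
    refine Finset.sum_bij' (fun q _ => fun j => (q.1 j, q.2 j))
      (fun f _ => (fun j => (f j).1, fun j => (f j).2)) ?_ ?_ ?_ ?_ ?_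
    · intro q hq
      simp only [Finset.mem_product, Finset.mem_filter] at hq
      simp only [Fintype.mem_piFinset, ht]
      intro j
      by_cases hj : j = i
      · subst hj; simp [hq.1.2, hq.2.2]
      · simp [hj]
    · intro f hf
      simp only [Fintype.mem_piFinset, ht] at hf
      have := hf i
      simp only [if_true, eq_self_iff_true, Finset.mem_singleton] at this
      simp only [Finset.mem_product, Finset.mem_filter, Finset.mem_univ, true_and]
      exact ⟨by rw [this], by rw [this]⟩
    · intro q hq; rfl
    · intro f hf; rfl
    · intro q hq; rfl
  rw [h1, ← Finset.prod_univ_sum]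
  rw [← Finset.mul_prod_erase Finset.univ _ (Finset.mem_univ i)]
  congr 1
  · simp [ht, hg]
  · apply Finset.prod_congr rfl
    intro j hj
    have hj' : j ≠ i := (Finset.mem_erase.mp hj).1
    simp only [ht, if_neg hj']
    rw [Fintype.sum_prod_type]

/-- With the LP slacks δ_{i,ξ_i,p_i} ≥ 0 and ι := μ − ∑_{ξ,p} y_{ξ,p} > 0
satisfying ∑_{ξ_i,p_i} δ_{i,ξ_i,p_i} = ι for every buyer i, the correction
ȳ_{ξ,p} := y_{ξ,p} + (∏_i δ_{i,ξ_i,p_i})/ι^{n−1} satisfies ȳ ≥ y pointwise and turns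
the relaxed constraints into equalities:
∑_{ξ':ξ'_i=ξ_i} ∑_{p':p'_i=p_i} ȳ_{ξ',p'} = ξ_i(θ)·t_{i,ξ_i,p_i}. -/
theorem corrected_y_tightens_constraints (n : ℕ) (hn : 1 ≤ n)
    (X P : Type) [Fintype X] [Fintype P] [DecidableEq X] [DecidableEq P]
    (e : Fin n → X → ℝ) (μ : ℝ)
    (y : (Fin n → X) → (Fin n → P) → ℝ)
    (t : Fin n → X → P → ℝ) (γ : Fin n → X → ℝ)
    (hy0 : ∀ ξ p, 0 ≤ y ξ p) (ht0 : ∀ i x pp, 0 ≤ t i x pp)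
    (hγ0 : ∀ i x, 0 ≤ γ i x)
    (ha : ∀ (i : Fin n) (x : X) (pp : P),
      e i x * t i x pp ≥
        ∑ ξ' ∈ Finset.univ.filter (fun ξ' : Fin n → X => ξ' i = x),
          ∑ p' ∈ Finset.univ.filter (fun p' : Fin n → P => p' i = pp), y ξ' p')
    (hb : ∀ (i : Fin n) (x : X), ∑ pp, t i x pp = γ i x)
    (hc : ∀ i : Fin n, ∑ x, γ i x * e i x = μ)
    -- the slack of constraint (a)
    (δ : Fin n → X → P → ℝ)
    (hδ : ∀ i x pp, δ i x pp =
      e i x * t i x pp -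
        ∑ ξ' ∈ Finset.univ.filter (fun ξ' : Fin n → X => ξ' i = x),
          ∑ p' ∈ Finset.univ.filter (fun p' : Fin n → P => p' i = pp), y ξ' p')
    (ι : ℝ) (hι : ι = μ - ∑ ξ : Fin n → X, ∑ p : Fin n → P, y ξ p)
    (hιpos : 0 < ι)
    (hsum : ∀ i : Fin n, ∑ x, ∑ pp, δ i x pp = ι)
    (ybar : (Fin n → X) → (Fin n → P) → ℝ)
    (hybar : ∀ ξ p, ybar ξ p = y ξ p + (∏ i, δ i (ξ i) (p i)) / ι ^ (n - 1)) :
    (∀ ξ p, ybar ξ p ≥ y ξ p) ∧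
      ∀ (i : Fin n) (x : X) (pp : P),
        (∑ ξ' ∈ Finset.univ.filter (fun ξ' : Fin n → X => ξ' i = x),
          ∑ p' ∈ Finset.univ.filter (fun p' : Fin n → P => p' i = pp), ybar ξ' p') =
        e i x * t i x pp := by
  have hδ0 : ∀ i x pp, 0 ≤ δ i x pp := by
    intro i x pp
    rw [hδ]
    linarith [ha i x pp]
  constructor
  · intro ξ p
    rw [hybar]
    have h1 : 0 ≤ (∏ i, δ i (ξ i) (p i)) / ι ^ (n - 1) :=
      div_nonneg (Finset.prod_nonneg fun j _ => hδ0 j _ _) (pow_nonneg hιpos.le _)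
    linarith
  · intro i x pp
    have hkey := key_prod_sum δ i x pp
    rw [Finset.prod_congr rfl (fun j _ => hsum j), Finset.prod_const] at hkey
    have hcard : (Finset.univ.erase i).card = n - 1 := by
      rw [Finset.card_erase_of_mem (Finset.mem_univ i)]
      simp
    rw [hcard] at hkey
    have expand :
        (∑ ξ' ∈ Finset.univ.filter (fun ξ' : Fin n → X => ξ' i = x),
          ∑ p' ∈ Finset.univ.filter (fun p' : Fin n → P => p' i = pp), ybar ξ' p') =
        (∑ ξ' ∈ Finset.univ.filter (fun ξ' : Fin n → X => ξ' i = x),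
          ∑ p' ∈ Finset.univ.filter (fun p' : Fin n → P => p' i = pp), y ξ' p') +
        (∑ ξ' ∈ Finset.univ.filter (fun ξ' : Fin n → X => ξ' i = x),
          ∑ p' ∈ Finset.univ.filter (fun p' : Fin n → P => p' i = pp),
            ∏ j, δ j (ξ' j) (p' j)) / ι ^ (n - 1) := by
      simp_rw [hybar, Finset.sum_add_distrib, ← Finset.sum_div]
    rw [expand, hkey]
    have hne : ι ^ (n - 1) ≠ 0 := pow_ne_zero _ hιpos.ne'
    rw [mul_div_assoc, div_self hne, mul_one]
    have := hδ i x pp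
    linarith
end

section
/- Let V ∈ [0,1]^{n×d} be a matrix of buyers' valuations, p ∈ [0,1]^n a price vector, ξ a posterior, and let i be the buyer who buys when valuations are Vξ − ε𝟙 (i.e., the minimal index with V_iξ − ε ≥ p_i). If γ is a probability distribution over posteriors with Pr_{ξ̃∼γ}[V_iξ̃ ≥ V_iξ − ε] ≥ 1 − α, then E_{ξ̃∼γ}[g_p(Vξ̃)] ≥ E_{ξ̃∼γ}[g_p(max{Vξ̃, Vξ − ε𝟙})] − α·g_{p+ε𝟙}(Vξ), where g_p(x) is the seller's revenue in the deterministic sequential auction with buyer valuations x and prices p (the first buyer j with x_j ≥ p_j pays p_j; revenue 0 if no such buyer), and the max is taken componentwise. -/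
open Finset

/-- Seller's revenue in the deterministic sequential posted price auction with
valuations `x` and prices `p`: the first buyer `j` with `x j ≥ p j` buys at price
`p j`; the revenue is 0 if no buyer buys. -/
noncomputable def gRev {n : ℕ} (p x : Fin n → ℝ) : ℝ :=
  if h : (Finset.univ.filter (fun j : Fin n => p j ≤ x j)).Nonempty then
    p ((Finset.univ.filter (fun j : Fin n => p j ≤ x j)).min' h)
  else 0

lemma gRev_nonneg {n : ℕ} (p x : Fin n → ℝ) (hp : ∀ j, 0 ≤ p j) : 0 ≤ gRev p x := by
  unfold gRev; split
  · exact hp _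
  · exact le_rfl

lemma gRev_max_cases {n : ℕ} (p x y : Fin n → ℝ) (i : Fin n)
    (hpi : p i ≤ y i) (hmin : ∀ j < i, y j < p j) :
    gRev p (fun j => max (x j) (y j)) = gRev p x ∨
      (gRev p (fun j => max (x j) (y j)) = p i ∧ (p i ≤ x i → gRev p x = p i)) := by
  classical
  set S := Finset.univ.filter (fun j : Fin n => p j ≤ max (x j) (y j)) with hS
  have hiS : i ∈ S := by
    simp only [hS, mem_filter, mem_univ, true_and]
    exact le_max_of_le_right hpi
  have hSne : S.Nonempty := ⟨i, hiS⟩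
  set m := S.min' hSne with hm
  have hmS : m ∈ S := S.min'_mem hSne
  have hmle : m ≤ i := S.min'_le i hiS
  have hgmax : gRev p (fun j => max (x j) (y j)) = p m := by
    rw [gRev, dif_pos hSne]
  set T := Finset.univ.filter (fun j : Fin n => p j ≤ x j) with hT
  have hTS : T ⊆ S := by
    intro j hj
    simp only [hT, mem_filter, mem_univ, true_and] at hj
    simp only [hS, mem_filter, mem_univ, true_and]
    exact le_max_of_le_left hj
  rcases lt_or_eq_of_le hmle with hlt | heq
  · have hym : y m < p m := hmin m hlt
    have hpm : p m ≤ max (x m) (y m) := by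
      simpa [hS] using hmS
    have hxm : p m ≤ x m := by
      rcases le_max_iff.mp hpm with h | h
      · exact h
      · exact absurd h (not_le.mpr hym)
    have hmT : m ∈ T := by simp [hT, hxm]
    have hTne : T.Nonempty := ⟨m, hmT⟩
    have h1 : T.min' hTne ≤ m := T.min'_le m hmT
    have h2 : m ≤ T.min' hTne := S.min'_le _ (hTS (T.min'_mem hTne))
    left
    rw [hgmax, gRev, dif_pos hTne]
    exact congrArg p (le_antisymm h1 h2).symm
  · right
    refine ⟨by rw [hgmax, heq], ?_⟩
    intro hxi
    have hiT : i ∈ T := by simp [hT, hxi]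
    have hTne : T.Nonempty := ⟨i, hiT⟩
    have h1 : T.min' hTne ≤ i := T.min'_le i hiT
    have h2 : i ≤ T.min' hTne := heq ▸ S.min'_le _ (hTS (T.min'_mem hTne))
    rw [gRev, dif_pos hTne]
    exact congrArg p (le_antisymm h1 h2)

/-- If `i` is the (minimal) buyer who buys at valuations Vξ − ε𝟙 and
prices p, and γ puts mass at least 1 − α on posteriors ξ̃ with V_iξ̃ ≥ V_iξ − ε, then
E_{ξ̃∼γ}[g_p(Vξ̃)] ≥ E_{ξ̃∼γ}[g_p(max{Vξ̃, Vξ − ε𝟙})] − α·g_{p+ε𝟙}(Vξ). -/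
theorem revenue_bound_under_decreasing_distribution (n d : ℕ) (α ε : ℝ)
    (hα : 0 < α) (hε : 0 < ε)
    (V : Fin n → Fin d → ℝ) (hV : ∀ i θ, V i θ ∈ Set.Icc (0 : ℝ) 1)
    (p : Fin n → ℝ) (hp : ∀ i, p i ∈ Set.Icc (0 : ℝ) 1)
    (ξ : Fin d → ℝ) (hξ0 : ∀ θ, 0 ≤ ξ θ) (hξ1 : ∑ θ, ξ θ = 1)
    (i : Fin n)
    (hi : (∑ θ, V i θ * ξ θ) - ε ≥ p i)
    (hi_min : ∀ j < i, (∑ θ, V j θ * ξ θ) - ε < p j)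
    -- the distribution γ over posteriors
    (κ : Type) [Fintype κ] (wt : κ → ℝ) (post : κ → Fin d → ℝ)
    (hwt0 : ∀ k, 0 ≤ wt k) (hwt1 : ∑ k, wt k = 1)
    (hpost0 : ∀ k θ, 0 ≤ post k θ) (hpost1 : ∀ k, ∑ θ, post k θ = 1)
    (hdec : ∑ k ∈ Finset.univ.filter
        (fun k => ∑ θ, V i θ * post k θ ≥ (∑ θ, V i θ * ξ θ) - ε), wt k ≥ 1 - α) :
    ∑ k, wt k * gRev p (fun j => ∑ θ, V j θ * post k θ) ≥
      (∑ k, wt k *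
          gRev p (fun j => max (∑ θ, V j θ * post k θ) ((∑ θ, V j θ * ξ θ) - ε))) -
        α * gRev (fun j => p j + ε) (fun j => ∑ θ, V j θ * ξ θ) := by
  classical
  set y : Fin n → ℝ := fun j => (∑ θ, V j θ * ξ θ) - ε with hy
  set x : κ → Fin n → ℝ := fun k j => ∑ θ, V j θ * post k θ with hx
  have hp0 : ∀ j, 0 ≤ p j := fun j => (hp j).1
  have hpi : p i ≤ y i := hi
  have hmin : ∀ j < i, y j < p j := hi_min
  -- value of gRev (p+ε) (Vξ)
  have hG : gRev (fun j => p j + ε) (fun j => ∑ θ, V j θ * ξ θ) = p i + ε := by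
    rw [gRev]
    have hiF : i ∈ Finset.univ.filter
        (fun j : Fin n => (fun j => p j + ε) j ≤ ∑ θ, V j θ * ξ θ) := by
      simp only [mem_filter, mem_univ, true_and]
      have := hpi; simp only [hy] at this; linarith
    have hne : (Finset.univ.filter
        (fun j : Fin n => (fun j => p j + ε) j ≤ ∑ θ, V j θ * ξ θ)).Nonempty := ⟨i, hiF⟩
    rw [dif_pos hne]
    have h1 := Finset.min'_le _ i hiF
    have hmem := Finset.min'_mem _ hne
    simp only [mem_filter, mem_univ, true_and] at hmem
    have h2 : i ≤ Finset.min' _ hne := by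
      by_contra h; push_neg at h
      have := hmin _ h
      simp only [hy] at this; linarith
    rw [le_antisymm h1 h2]
  rw [hG]
  have hkey : ∀ k, gRev p (fun j => max (x k j) (y j)) ≤
      gRev p (x k) + (if p i ≤ x k i then 0 else p i + ε) := by
    intro k
    rcases gRev_max_cases p (x k) y i hpi hmin with h | ⟨h1, h2⟩
    · rw [h]
      split
      · simp
      · nlinarith [hp0 i, hε.le]
    · by_cases hxi : p i ≤ x k i
      · rw [if_pos hxi, h1, h2 hxi]; simp
      · rw [if_neg hxi, h1]
        have := gRev_nonneg p (x k) hp0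
        linarith
  set c : κ → ℝ := fun k => if p i ≤ x k i then 0 else p i + ε with hc
  have hsum1 : ∑ k, wt k * gRev p (fun j => max (x k j) (y j)) ≤
      ∑ k, wt k * gRev p (x k) + ∑ k, wt k * c k := by
    rw [← Finset.sum_add_distrib]
    apply Finset.sum_le_sum
    intro k _
    rw [← mul_add]
    exact mul_le_mul_of_nonneg_left (hkey k) (hwt0 k)
  have hcbound : ∑ k, wt k * c k ≤ α * (p i + ε) := by
    set G := Finset.univ.filter
        (fun k => ∑ θ, V i θ * post k θ ≥ (∑ θ, V i θ * ξ θ) - ε) with hGset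
    have hsplit : ∑ k, wt k * c k = ∑ k ∈ Gᶜ, wt k * c k := by
      rw [← Finset.sum_add_sum_compl G]
      have : ∑ k ∈ G, wt k * c k = 0 := by
        apply Finset.sum_eq_zero
        intro k hk
        simp only [hGset, mem_filter, mem_univ, true_and] at hk
        have hpx : p i ≤ x k i := le_trans hpi hk
        simp [hc, hpx]
      rw [this, zero_add]
    rw [hsplit]
    have h1 : ∑ k ∈ Gᶜ, wt k * c k ≤ ∑ k ∈ Gᶜ, wt k * (p i + ε) := by
      apply Finset.sum_le_sum
      intro k _
      apply mul_le_mul_of_nonneg_left _ (hwt0 k)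
      simp only [hc]
      split
      · nlinarith [hp0 i, hε.le]
      · exact le_rfl
    have h2 : ∑ k ∈ Gᶜ, wt k ≤ α := by
      have hsc := Finset.sum_add_sum_compl G wt
      rw [hwt1] at hsc
      linarith [hdec]
    calc ∑ k ∈ Gᶜ, wt k * c k ≤ ∑ k ∈ Gᶜ, wt k * (p i + ε) := h1
      _ = (∑ k ∈ Gᶜ, wt k) * (p i + ε) := by rw [Finset.sum_mul]
      _ ≤ α * (p i + ε) := mul_le_mul_of_nonneg_right h2 (by nlinarith [hp0 i, hε.le])
  have hfinal := hsum1.trans (by linarith : ∑ k, wt k * gRev p (x k) + ∑ k, wt k * c k ≤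
      ∑ k, wt k * gRev p (x k) + α * (p i + ε))
  have e1 : ∀ k, gRev p (fun j => ∑ θ, V j θ * post k θ) = gRev p (x k) := fun k => rfl
  have e2 : ∀ k, gRev p
      (fun j => max (∑ θ, V j θ * post k θ) ((∑ θ, V j θ * ξ θ) - ε)) =
      gRev p (fun j => max (x k j) (y j)) := fun k => rfl
  simp only [e1, e2]
  linarith [hfinal]
end
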